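/- Let W = (𝒫, n) be a well-defined Wilson loop diagram with V_𝒫 = Fin n whose matroid M = M(W) is connected. Let P ⊆ 𝒫 be nonempty and proper such that F(P) is a union of circuits of M, the restriction M|F(P) is connected, and the contraction M/F(P) is connected (i.e., F(P) is a flacet of M). If F(P) is not a cyclic interval of Fin n, then W has two crossing propagators: there exist p, q ∈ 𝒫 whose endpoints interleave, i.e. exactly one of i_q, j_q lies in the open cyclic interval from i_p to j_p and the other lies in the open cyclic interval from j_p to i_p. -/

import Mathlib

open Matroid Set

/-- The support of a propagator: its two endpoints and their cyclic successors. -/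
def Vp (n : ℕ) [NeZero n] (p : Fin n × Fin n) : Set (Fin n) :=
  {p.1, p.1 + 1, p.2, p.2 + 1}

/-- The support of a set of propagators. -/
def VP (n : ℕ) [NeZero n] (P : Set (Fin n × Fin n)) : Set (Fin n) :=
  ⋃ p ∈ P, Vp n p

/-- `propsOf n Ps S` is `Prop(S)`: the propagators of `Ps` whose support meets `S`. -/
def propsOf (n : ℕ) [NeZero n] (Ps : Set (Fin n × Fin n)) (S : Set (Fin n)) :
    Set (Fin n × Fin n) :=
  {p ∈ Ps | (Vp n p ∩ S).Nonempty}

/-- A Wilson loop diagram `(Ps, n)` is well defined if `|V_P| ≥ |P| + 3`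
for every nonempty `P ⊆ Ps`. -/
def WellDefinedWLD (n : ℕ) [NeZero n] (Ps : Set (Fin n × Fin n)) : Prop :=
  ∀ P ⊆ Ps, P.Nonempty → P.ncard + 3 ≤ (VP n P).ncard
/-- A circuit of a matroid: a minimal dependent set. -/
def Matroid.IsCircuitOf {α : Type*} (M : Matroid α) (C : Set α) : Prop :=
  M.Dep C ∧ ∀ D ⊂ C, ¬ M.Dep D

/-- A union of circuits (a cyclic set) of a matroid. -/
def Matroid.UnionOfCircuits {α : Type*} (M : Matroid α) (C : Set α) : Prop :=
  ∃ 𝒞 : Set (Set α), (∀ D ∈ 𝒞, M.IsCircuitOf D) ∧ C = ⋃₀ 𝒞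

/-- A matroid is connected if its ground set is nonempty and any two elements of the
ground set are equal or lie on a common circuit. -/
def Matroid.Conn {α : Type*} (M : Matroid α) : Prop :=
  M.E.Nonempty ∧ ∀ x ∈ M.E, ∀ y ∈ M.E, x = y ∨ ∃ C, M.IsCircuitOf C ∧ x ∈ C ∧ y ∈ C

/-- The rank of a set in a matroid: the maximal size of an independent subset. -/
noncomputable def Matroid.rk' {α : Type*} (M : Matroid α) (X : Set α) : ℕ :=
  sSup (Set.ncard '' {I | M.Indep I ∧ I ⊆ X})

/-- Contraction of a matroid by a set, defined via duality. -/
def Matroid.contractBy {α : Type*} (M : Matroid α) (C : Set α) : Matroid α :=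
  (M✶ ↾ (M.E \ C))✶

/-- The propagator flat `F(P)`: vertices supporting only propagators in `P`. -/
def FP (n : ℕ) [NeZero n] (Ps P : Set (Fin n × Fin n)) : Set (Fin n) :=
  VP n P \ VP n (Ps \ P)

open Fin.NatCast in
/-- A cyclic interval of `Fin n`: a set of the form `{a, a+1, …, a+(m-1)}`,
with addition mod `n`. -/
def CyclicInterval (n : ℕ) [NeZero n] (S : Set (Fin n)) : Prop :=
  ∃ (a : Fin n) (m : ℕ), S = {x : Fin n | ∃ i < m, x = a + (i : Fin n)}

open Fin.NatCast in
/-- The open cyclic interval from `a` to `b`: the vertices strictly between `a` and `b`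
in the counterclockwise cyclic order, excluding `a` and `b`. -/
def openCyclicInterval (n : ℕ) [NeZero n] (a b : Fin n) : Set (Fin n) :=
  {x : Fin n | ∃ i : ℕ, 0 < i ∧ i < (b - a).val ∧ x = a + (i : Fin n)}

/-- Two propagators cross when their endpoints interleave: exactly one endpoint of `q`
lies strictly between the endpoints of `p` on each of the two arcs they determine. -/
def CrossingProps (n : ℕ) [NeZero n] (p q : Fin n × Fin n) : Prop :=
  (q.1 ∈ openCyclicInterval n p.1 p.2 ∧ q.2 ∈ openCyclicInterval n p.2 p.1) ∨
  (q.2 ∈ openCyclicInterval n p.1 p.2 ∧ q.1 ∈ openCyclicInterval n p.2 p.1)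

/-!
Suppose no two propagators cross, write `F = F(P)` and measure positions on the circle from a
base point `z ∈ F`. Since `F` is not a cyclic interval there are `c, d ∉ F` and `w ∈ F` with
`c < w < d`. The deficiency `|U| - |Prop(U)|` is supermodular, positive on circuits and
nonpositive on independent sets; hence `F`, a union of circuits, has maximal deficiency among its
subsets, and a basis of `F` has at least `|Prop(F)|` elements.

A propagator `q` whose support avoids `F` cannot have points of `F` on both sides: a circuit of
`M ↾ F` through two such points would split along `q` into two halves, and by non-crossing every
propagator meets at most one half, contradicting positive deficiency. So the support of `q` lies
in one gap of `F` and does not straddle `w`. A circuit of `M ／ F` through `c` and `d` therefore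
splits at `w` into two independent halves whose propagator sets, enlarged by `Prop(F)`, overlap
only in `Prop(F)`; counting with a basis of `F` gives a contradiction.
-/

namespace Fin

lemma val_sub_eq_ite {n : ℕ} (a b : Fin n) :
    (a - b).val = if b.val ≤ a.val then a.val - b.val else n + a.val - b.val := by
  split_ifs with h
  · exact sub_val_of_le h
  · exact coe_sub_iff_lt.2 (not_le.1 h)

lemma val_add_one_eq_ite {n : ℕ} [NeZero n] (a : Fin n) :
    (a + 1).val = if a.val + 1 = n then 0 else a.val + 1 := by
  rcases Nat.lt_or_ge 1 n with hn | hn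
  · rw [val_add, val_one', Nat.mod_eq_of_lt hn]
    split_ifs with h
    · rw [h, Nat.mod_self]
    · exact Nat.mod_eq_of_lt (by omega)
  · obtain rfl : n = 1 := by have := NeZero.pos n; omega
    simp

end Fin

section CyclicOrder

variable {n : ℕ} [NeZero n] {F : Set (Fin n)} {a b u v w x z : Fin n} {p : Fin n × Fin n}

def closedCyclicInterval (n : ℕ) [NeZero n] (a b : Fin n) : Set (Fin n) :=
  {x | (x - a).val ≤ (b - a).val}

lemma mem_openCyclicInterval_iff :
    x ∈ openCyclicInterval n a b ↔ 0 < (x - a).val ∧ (x - a).val < (b - a).val := by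
  constructor
  · rintro ⟨i, hi0, hib, rfl⟩
    have hin : i < n := hib.trans (b - a).isLt
    rw [add_sub_cancel_left, Fin.val_cast_of_lt hin]
    exact ⟨hi0, hib⟩
  · rintro ⟨h0, h1⟩
    exact ⟨(x - a).val, h0, h1, by rw [Fin.cast_val_eq_self, add_sub_cancel]⟩

lemma not_mem_openCyclicInterval_swap (h : x ∈ openCyclicInterval n a b) :
    x ∉ openCyclicInterval n b a := by
  have := a.isLt; have := b.isLt; have := x.isLt
  simp only [mem_openCyclicInterval_iff, Fin.val_sub_eq_ite] at *
  split_ifs at * <;> omega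

lemma mem_openCyclicInterval_or_swap (hab : a ≠ b) (hxa : x ≠ a) (hxb : x ≠ b) :
    x ∈ openCyclicInterval n a b ∨ x ∈ openCyclicInterval n b a := by
  have := a.isLt; have := b.isLt; have := x.isLt
  simp only [mem_openCyclicInterval_iff, Fin.val_sub_eq_ite, ne_eq, ← Fin.val_inj] at *
  split_ifs <;> omega

lemma left_mem_closedCyclicInterval : a ∈ closedCyclicInterval n a b := by
  simp [closedCyclicInterval]

lemma right_mem_closedCyclicInterval : b ∈ closedCyclicInterval n a b :=
  show (b - a).val ≤ (b - a).val from le_rfl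

lemma mem_and_add_one_mem_closedCyclicInterval_succ (hba : b + 1 ≠ a)
    (hx : x ∈ closedCyclicInterval n a b) :
    x ∈ closedCyclicInterval n a (b + 1) ∧ x + 1 ∈ closedCyclicInterval n a (b + 1) := by
  have := a.isLt; have := b.isLt; have := x.isLt
  simp only [closedCyclicInterval, Set.mem_ofPred_eq, Fin.val_sub_eq_ite, Fin.val_add_one_eq_ite,
    ne_eq, ← Fin.val_inj] at *
  split_ifs at * <;> omega

lemma Vp_subset_closedCyclicInterval_succ (hba : b + 1 ≠ a)
    (h1 : p.1 ∈ closedCyclicInterval n a b) (h2 : p.2 ∈ closedCyclicInterval n a b) :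
    Vp n p ⊆ closedCyclicInterval n a (b + 1) := by
  have := mem_and_add_one_mem_closedCyclicInterval_succ hba h1
  have := mem_and_add_one_mem_closedCyclicInterval_succ hba h2
  simp only [Vp, Set.insert_subset_iff, Set.singleton_subset_iff]
  tauto

lemma closedCyclicInterval_succ_subset :
    closedCyclicInterval n a (b + 1) ⊆ openCyclicInterval n a b ∪ Vp n (a, b) := by
  intro x hx
  have := a.isLt; have := b.isLt; have := x.isLt
  simp only [closedCyclicInterval, Set.mem_ofPred_eq, Set.mem_union, mem_openCyclicInterval_iff,
    Vp, Set.mem_insert_iff, Set.mem_singleton_iff, Fin.val_sub_eq_ite, Fin.val_add_one_eq_ite,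
    ← Fin.val_inj] at *
  split_ifs at * <;> omega

lemma mem_closedCyclicInterval_of_not_crossing (hab : a ≠ b)
    (h : ¬ CrossingProps n (a, b) p) :
    (p.1 ∈ closedCyclicInterval n a b ∧ p.2 ∈ closedCyclicInterval n a b) ∨
      (p.1 ∈ closedCyclicInterval n b a ∧ p.2 ∈ closedCyclicInterval n b a) := by
  have := a.isLt; have := b.isLt; have := p.1.isLt; have := p.2.isLt
  simp only [CrossingProps, closedCyclicInterval, Set.mem_ofPred_eq, mem_openCyclicInterval_iff,
    Fin.val_sub_eq_ite, ne_eq, ← Fin.val_inj] at *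
  split_ifs at * <;> omega

lemma mem_closedCyclicInterval_of_between (hz : z ∉ closedCyclicInterval n a b)
    (hu : u ∈ closedCyclicInterval n a b) (hv : v ∈ closedCyclicInterval n a b)
    (huw : (u - z).val ≤ (w - z).val) (hwv : (w - z).val ≤ (v - z).val) :
    w ∈ closedCyclicInterval n a b := by
  have := a.isLt; have := b.isLt; have := u.isLt; have := v.isLt; have := w.isLt; have := z.isLt
  simp only [closedCyclicInterval, Set.mem_ofPred_eq, Fin.val_sub_eq_ite] at *
  split_ifs at * <;> omega

lemma Vp_swap (a b : Fin n) : Vp n (a, b) = Vp n (b, a) := by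
  ext
  simp only [Vp, Set.mem_insert_iff, Set.mem_singleton_iff]
  tauto

lemma Vp_subset_of_not_crossing (hab : a ≠ b) (hba : b + 1 ≠ a) (hab' : a + 1 ≠ b)
    (h : ¬ CrossingProps n (a, b) p) :
    Vp n p ⊆ openCyclicInterval n a b ∪ Vp n (a, b) ∨
      Vp n p ⊆ openCyclicInterval n b a ∪ Vp n (a, b) := by
  rcases mem_closedCyclicInterval_of_not_crossing hab h with ⟨h1, h2⟩ | ⟨h1, h2⟩
  · exact .inl ((Vp_subset_closedCyclicInterval_succ hba h1 h2).trans
      closedCyclicInterval_succ_subset)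
  · rw [Vp_swap a b]
    exact .inr ((Vp_subset_closedCyclicInterval_succ hab' h1 h2).trans
      closedCyclicInterval_succ_subset)

lemma not_lt_lt_of_disjoint_openCyclicInterval_union (hba : b + 1 ≠ a)
    (hF : Disjoint F (openCyclicInterval n a b ∪ Vp n (a, b))) (hz : z ∈ F) (hw : w ∈ F)
    (hu : u ∈ Vp n (a, b)) (hv : v ∈ Vp n (a, b)) :
    ¬ ((u - z).val < (w - z).val ∧ (w - z).val < (v - z).val) := by
  rintro ⟨huw, hwv⟩
  have hVp := Vp_subset_closedCyclicInterval_succ hba (p := (a, b))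
    left_mem_closedCyclicInterval right_mem_closedCyclicInterval
  have hz' : z ∉ closedCyclicInterval n a (b + 1) := fun h =>
    hF.notMem_of_mem_left hz (closedCyclicInterval_succ_subset h)
  exact hF.notMem_of_mem_left hw (closedCyclicInterval_succ_subset
    (mem_closedCyclicInterval_of_between hz' (hVp hu) (hVp hv) huw.le hwv.le))

end CyclicOrder

section Intervals

variable {n : ℕ} [NeZero n] {S : Set (Fin n)} {z : Fin n}

open Fin.NatCast in
lemma cyclicInterval_of_forall_mem_iff (a : Fin n) (m : ℕ)
    (h : ∀ x, x ∈ S ↔ (x - a).val < m) : CyclicInterval n S := by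
  refine ⟨a, m, Set.ext fun x => (h x).trans ⟨fun hx => ⟨_, hx, ?_⟩, ?_⟩⟩
  · rw [Fin.cast_val_eq_self, add_sub_cancel]
  · rintro ⟨i, hi, rfl⟩
    rw [add_sub_cancel_left, Fin.val_natCast]
    exact (Nat.mod_le i n).trans_lt hi

lemma exists_lt_lt_of_not_cyclicInterval (hS : ¬ CyclicInterval n S) (hz : z ∈ S) :
    ∃ c ∉ S, ∃ d ∉ S, ∃ w ∈ S,
      (c - z).val < (w - z).val ∧ (w - z).val < (d - z).val := by
  by_contra! hconv
  obtain ⟨c, hc⟩ : Sᶜ.Nonempty := by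
    refine Set.nonempty_compl.2 fun hS_univ => hS (cyclicInterval_of_forall_mem_iff 0 n ?_)
    simp [hS_univ]
  obtain ⟨xmin, hxmin, hmin⟩ :=
    Set.exists_min_image Sᶜ (fun x => (x - z).val) (Set.toFinite _) ⟨c, hc⟩
  obtain ⟨xmax, hxmax, hmax⟩ :=
    Set.exists_max_image Sᶜ (fun x => (x - z).val) (Set.toFinite _) ⟨c, hc⟩
  have hcompl : ∀ x, x ∉ S ↔
      (xmin - z).val ≤ (x - z).val ∧ (x - z).val ≤ (xmax - z).val := by
    refine fun x => ⟨fun hx => ⟨hmin x hx, hmax x hx⟩, fun ⟨h1, h2⟩ hx => ?_⟩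
    have hne : ∀ y ∉ S, (x - z).val ≠ (y - z).val := fun y hy h =>
      hy (sub_left_injective (Fin.ext h) ▸ hx)
    exact (hconv xmin hxmin xmax hxmax x hx (lt_of_le_of_ne h1 (hne _ hxmin).symm)).not_gt
      (lt_of_le_of_ne h2 (hne _ hxmax))
  refine hS (cyclicInterval_of_forall_mem_iff (xmax + 1)
    (n - 1 - ((xmax - z).val - (xmin - z).val)) fun x => ?_)
  have hzS : (xmin - z).val ≠ 0 := fun h => hxmin (sub_eq_zero.1 (Fin.ext h) ▸ hz)
  have hle := hmin xmax hxmax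
  rw [← not_iff_not, hcompl]
  have := x.isLt; have := z.isLt; have := xmin.isLt; have := xmax.isLt
  simp only [Fin.val_sub_eq_ite, Fin.val_add_one_eq_ite] at hzS hle ⊢
  split_ifs at hzS hle ⊢ <;> omega

end Intervals

namespace Matroid

variable {α : Type*} {M : Matroid α} {C F : Set α} {x y : α}

lemma isCircuitOf_iff_isCircuit : M.IsCircuitOf C ↔ M.IsCircuit C := by
  rw [isCircuit_iff_forall_ssubset, IsCircuitOf]
  refine and_congr_right fun hC => forall₂_congr fun D hDC => ?_
  exact not_dep_iff (hDC.subset.trans hC.subset_ground)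

lemma Conn.exists_isCircuit (hM : M.Conn) (hx : x ∈ M.E) (hy : y ∈ M.E) (hxy : x ≠ y) :
    ∃ C, M.IsCircuit C ∧ x ∈ C ∧ y ∈ C := by
  simpa [isCircuitOf_iff_isCircuit, hxy] using hM.2 x hx y hy

lemma UnionOfCircuits.exists_isCircuit (hF : M.UnionOfCircuits F) (hx : x ∈ F) :
    ∃ C ⊆ F, M.IsCircuit C ∧ x ∈ C := by
  obtain ⟨𝒞, h𝒞, rfl⟩ := hF
  obtain ⟨C, hC, hxC⟩ := hx
  exact ⟨C, subset_sUnion_of_mem hC, isCircuitOf_iff_isCircuit.1 (h𝒞 C hC), hxC⟩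

variable (M) in
lemma unionOfCircuits_empty : M.UnionOfCircuits ∅ :=
  ⟨∅, by simp, by simp⟩

end Matroid

section Deficiency

variable {n : ℕ} [NeZero n] {Ps : Set (Fin n × Fin n)}

lemma propsOf_mono {S T : Set (Fin n)} (h : S ⊆ T) : propsOf n Ps S ⊆ propsOf n Ps T :=
  fun _ ⟨hp, z, hzp, hzS⟩ => ⟨hp, z, hzp, h hzS⟩

lemma propsOf_union (S T : Set (Fin n)) :
    propsOf n Ps (S ∪ T) = propsOf n Ps S ∪ propsOf n Ps T := by
  ext p
  simp only [propsOf, Set.inter_union_distrib_left, Set.union_nonempty, Set.mem_union,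
    Set.mem_ofPred_eq, and_or_left]

@[simp]
lemma propsOf_empty : propsOf n Ps ∅ = ∅ := by
  simp [propsOf]

variable (Ps) in
noncomputable def deficiency (U : Set (Fin n)) : ℤ := U.ncard - (propsOf n Ps U).ncard

lemma deficiency_add_deficiency_le (U V : Set (Fin n)) :
    deficiency Ps U + deficiency Ps V ≤ deficiency Ps (U ∪ V) + deficiency Ps (U ∩ V) := by
  have hUV := Set.ncard_union_add_ncard_inter U V
  have hprops := Set.ncard_union_add_ncard_inter (propsOf n Ps U) (propsOf n Ps V)
  have hinter : (propsOf n Ps (U ∩ V)).ncard ≤ (propsOf n Ps U ∩ propsOf n Ps V).ncard :=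
    Set.ncard_le_ncard (Set.subset_inter (propsOf_mono Set.inter_subset_left)
      (propsOf_mono Set.inter_subset_right))
  rw [← propsOf_union] at hprops
  simp only [deficiency]
  omega

end Deficiency

section WilsonLoopMatroid

variable {n : ℕ} [NeZero n] {Ps : Set (Fin n × Fin n)} {M : Matroid (Fin n)}
  {A B C F I K S U V : Set (Fin n)}
  (hMI : ∀ S : Set (Fin n), M.Indep S ↔ ∀ U ⊆ S, U.ncard ≤ (propsOf n Ps U).ncard)
include hMI

lemma deficiency_nonpos_of_indep (hS : M.Indep S) (hUS : U ⊆ S) : deficiency Ps U ≤ 0 := by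
  have := (hMI S).1 hS U hUS
  simp only [deficiency]
  omega

lemma exists_deficiency_pos_of_not_indep (hS : ¬ M.Indep S) :
    ∃ U ⊆ S, 0 < deficiency Ps U := by
  simp only [hMI, not_forall, not_le, exists_prop] at hS
  obtain ⟨U, hUS, hU⟩ := hS
  exact ⟨U, hUS, by simp only [deficiency]; omega⟩

lemma Matroid.IsCircuit.deficiency_pos (hC : M.IsCircuit C) : 0 < deficiency Ps C := by
  obtain ⟨U, hUC, hU⟩ := exists_deficiency_pos_of_not_indep hMI hC.not_indep
  obtain rfl | hUC := hUC.eq_or_ssubset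
  · exact hU
  · exact absurd (deficiency_nonpos_of_indep hMI (hC.ssubset_indep hUC) subset_rfl) hU.not_ge

lemma deficiency_le_of_unionOfCircuits (hF : M.UnionOfCircuits F) (hV : V ⊆ F) :
    deficiency Ps V ≤ deficiency Ps F := by
  obtain ⟨U, hUF, hUmax⟩ := Set.exists_max_image {U | U ⊆ F} (deficiency Ps) (Set.toFinite _)
    ⟨∅, Set.empty_subset F⟩
  suffices hFU : F ⊆ U by
    rw [← hUF.antisymm hFU]
    exact hUmax V hV
  intro x hx
  by_contra hxU
  obtain ⟨C, hCF, hC, hxC⟩ := hF.exists_isCircuit hx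
  -- adding a circuit that is not contained in `U` strictly increases the deficiency
  have hCU : deficiency Ps (U ∩ C) ≤ 0 := deficiency_nonpos_of_indep hMI
    (hC.ssubset_indep ⟨Set.inter_subset_right, fun h => hxU (h hxC).1⟩) subset_rfl
  have hsuper := deficiency_add_deficiency_le (Ps := Ps) U C
  have hmax := hUmax (U ∪ C) (Set.union_subset hUF hCF)
  have hpos := hC.deficiency_pos hMI
  omega

-- Each `x ∈ F \ I` gives a set of positive deficiency inside `insert x I`, and these add up by
-- supermodularity since `I` is independent.
lemma Matroid.IsBasis.exists_deficiency_ge (hI : M.IsBasis I F) (T : Finset (Fin n))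
    (hT : ↑T ⊆ F \ I) : ∃ V ⊆ I ∪ T, (T.card : ℤ) ≤ deficiency Ps V := by
  classical
  induction T using Finset.induction_on with
  | empty => exact ⟨∅, Set.empty_subset _, by simp [deficiency]⟩
  | insert x T hxT ih =>
    rw [Finset.coe_insert, Set.insert_subset_iff] at hT
    obtain ⟨V, hVI, hV⟩ := ih hT.2
    obtain ⟨U, hUI, hU⟩ := exists_deficiency_pos_of_not_indep hMI (hI.insert_dep hT.1).not_indep
    have hVU : V ∩ U ⊆ I := fun y ⟨hyV, hyU⟩ => (hUI hyU).resolve_left fun hyx =>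
      (hVI (hyx ▸ hyV)).elim (fun h => hT.1.2 h) (fun h => hxT h)
    refine ⟨V ∪ U, Set.union_subset (hVI.trans ?_) (hUI.trans ?_), ?_⟩
    · exact Set.union_subset_union_right _ (by simp)
    · rw [Finset.coe_insert, Set.insert_subset_iff]
      exact ⟨Or.inr (Set.mem_insert _ _), Set.subset_union_left⟩
    have hsuper := deficiency_add_deficiency_le (Ps := Ps) V U
    have hVUdef := deficiency_nonpos_of_indep hMI hI.indep hVU
    rw [Finset.card_insert_of_notMem hxT]
    push_cast
    omega

lemma Matroid.IsBasis.ncard_propsOf_le (hF : M.UnionOfCircuits F) (hI : M.IsBasis I F) :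
    (propsOf n Ps F).ncard ≤ I.ncard := by
  obtain ⟨V, hVF, hV⟩ := hI.exists_deficiency_ge hMI (Set.toFinite (F \ I)).toFinset (by simp)
  rw [Set.Finite.coe_toFinset, Set.union_sdiff_cancel hI.subset] at hVF
  have hmax := deficiency_le_of_unionOfCircuits hMI hF hVF
  have hcard := Set.ncard_sdiff_add_ncard_of_subset hI.subset
  rw [← Set.ncard_eq_toFinset_card _ (Set.toFinite _)] at hV
  simp only [deficiency] at hV hmax
  omega

lemma ncard_add_ncard_propsOf_le_of_contract_indep (hFE : F ⊆ M.E) (hF : M.UnionOfCircuits F)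
    (hK : (M ／ F).Indep K) :
    K.ncard + (propsOf n Ps F).ncard ≤ (propsOf n Ps (K ∪ F)).ncard := by
  obtain ⟨I, hI⟩ := M.exists_isBasis F
  obtain ⟨hKI, hFK⟩ := hI.contract_indep_iff.1 hK
  have hcard : (K ∪ I).ncard = K.ncard + I.ncard :=
    Set.ncard_union_eq (hFK.symm.mono_right hI.subset)
  have hKIprops := (hMI _).1 hKI _ subset_rfl
  have hmono := Set.ncard_le_ncard
    (propsOf_mono (Ps := Ps) (Set.union_subset_union_right K hI.subset))
  have hIF := hI.ncard_propsOf_le hMI hF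
  omega

lemma ncard_propsOf_lt_of_contract_isCircuit (hFE : F ⊆ M.E) (hC : (M ／ F).IsCircuit C) :
    (propsOf n Ps (C ∪ F)).ncard < C.ncard + (propsOf n Ps F).ncard := by
  obtain ⟨I, hI⟩ := M.exists_isBasis F
  obtain ⟨hCI, hFC⟩ := hI.contract_dep_iff.1 hC.dep
  obtain ⟨U, hUCI, hU⟩ := exists_deficiency_pos_of_not_indep hMI hCI.not_indep
  have hCU : C ⊆ U := by
    by_contra hCU
    have hUC : U ∩ C ⊂ C := ⟨Set.inter_subset_right, fun h => hCU fun x hx => (h hx).1⟩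
    have hindep : M.Indep ((U ∩ C) ∪ I) := (hI.contract_indep_iff.1 (hC.ssubset_indep hUC)).1
    refine hU.not_ge (deficiency_nonpos_of_indep hMI hindep fun x hx => ?_)
    exact (hUCI hx).elim (fun h => Or.inl ⟨hx, h⟩) Or.inr
  have hUF : U ∪ F = C ∪ F := by
    refine (Set.union_subset_union_left F hCU).antisymm'
      (Set.union_subset ?_ Set.subset_union_right)
    exact hUCI.trans (Set.union_subset_union_right C hI.subset)
  have hUFI : U ∩ F ⊆ I := fun x ⟨hxU, hxF⟩ =>
    (hUCI hxU).resolve_left fun hxC => hFC.notMem_of_mem_left hxF hxC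
  have hsuper := deficiency_add_deficiency_le (Ps := Ps) U F
  have hUFdef := deficiency_nonpos_of_indep hMI hI.indep hUFI
  have hcard := Set.ncard_union_eq hFC.symm
  rw [hUF] at hsuper
  simp only [deficiency] at hsuper hUFdef hU
  omega

lemma not_propsOf_inter_subset_of_contract_isCircuit (hFE : F ⊆ M.E) (hF : M.UnionOfCircuits F)
    (hC : (M ／ F).IsCircuit C) (hAC : A ⊂ C) (hBC : B ⊂ C) (hABC : A ∪ B = C) :
    ¬ propsOf n Ps (A ∪ F) ∩ propsOf n Ps (B ∪ F) ⊆ propsOf n Ps F := by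
  intro hAB
  have hA := ncard_add_ncard_propsOf_le_of_contract_indep hMI hFE hF (hC.ssubset_indep hAC)
  have hB := ncard_add_ncard_propsOf_le_of_contract_indep hMI hFE hF (hC.ssubset_indep hBC)
  have hCF := ncard_propsOf_lt_of_contract_isCircuit hMI hFE hC
  have hunion : propsOf n Ps (A ∪ F) ∪ propsOf n Ps (B ∪ F) = propsOf n Ps (C ∪ F) := by
    rw [← propsOf_union, ← Set.union_union_distrib_right, hABC]
  have hsum := Set.ncard_union_add_ncard_inter (propsOf n Ps (A ∪ F)) (propsOf n Ps (B ∪ F))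
  rw [hunion] at hsum
  have hinter := Set.ncard_le_ncard hAB
  have hcard : C.ncard ≤ A.ncard + B.ncard := hABC ▸ Set.ncard_union_le A B
  omega

lemma Matroid.IsCircuit.not_disjoint_propsOf (hC : M.IsCircuit C) (hAC : A ⊂ C) (hBC : B ⊂ C)
    (hABC : A ∪ B = C) : ¬ Disjoint (propsOf n Ps A) (propsOf n Ps B) := by
  rw [Set.disjoint_iff]
  simpa using not_propsOf_inter_subset_of_contract_isCircuit hMI (Set.empty_subset M.E)
    M.unionOfCircuits_empty (by simpa using hC) hAC hBC hABC

end WilsonLoopMatroid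

section Locality

variable {n : ℕ} [NeZero n] {Ps : Set (Fin n × Fin n)} {M : Matroid (Fin n)} {F : Set (Fin n)}
  {u v w z : Fin n} {q : Fin n × Fin n}

lemma WellDefinedWLD.support_ne (hW : WellDefinedWLD n Ps) (hq : q ∈ Ps) :
    q.1 ≠ q.2 ∧ q.2 + 1 ≠ q.1 ∧ q.1 + 1 ≠ q.2 := by
  have h4 : 4 ≤ (Vp n q).ncard := by
    simpa [VP] using hW {q} (Set.singleton_subset_iff.2 hq) (Set.singleton_nonempty q)
  have h3 : ∀ x y z : Fin n, ¬ Vp n q ⊆ {x, y, z} := fun x y z h => by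
    have := (Set.ncard_le_ncard h).trans (Set.ncard_insert_le x _)
    have := Set.ncard_insert_le y {z}
    simp only [Set.ncard_singleton] at *
    omega
  refine ⟨fun h => h3 q.1 (q.1 + 1) (q.2 + 1) ?_, fun h => h3 q.1 (q.1 + 1) q.2 ?_,
    fun h => h3 q.1 q.2 (q.2 + 1) ?_⟩ <;>
  simp [Vp, Set.insert_subset_iff, h]

variable (hMI : ∀ S : Set (Fin n), M.Indep S ↔ ∀ U ⊆ S, U.ncard ≤ (propsOf n Ps U).ncard)
  (hW : WellDefinedWLD n Ps) (hcross : ∀ p ∈ Ps, ∀ q ∈ Ps, ¬ CrossingProps n p q)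
  (hFE : F ⊆ M.E) (hF : (M ↾ F).Conn)
include hMI hW hcross hFE hF

lemma disjoint_openCyclicInterval_of_not_crossing (hq : q ∈ Ps) (hqF : Disjoint (Vp n q) F) :
    Disjoint F (openCyclicInterval n q.1 q.2) ∨ Disjoint F (openCyclicInterval n q.2 q.1) := by
  obtain ⟨h12, h21, h12'⟩ := hW.support_ne hq
  by_contra! h
  obtain ⟨x, hxF, hx⟩ := Set.not_disjoint_iff.1 h.1
  obtain ⟨y, hyF, hy⟩ := Set.not_disjoint_iff.1 h.2
  obtain ⟨C, hC, hxC, hyC⟩ := hF.exists_isCircuit hxF hyF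
    fun hxy => not_mem_openCyclicInterval_swap hx (hxy ▸ hy)
  rw [restrict_isCircuit_iff hFE] at hC
  have hCq : ∀ x ∈ C, x ∉ Vp n q := fun x hx hxq => hqF.notMem_of_mem_left hxq (hC.2 hx)
  refine hC.1.not_disjoint_propsOf hMI (Ps := Ps) (A := C ∩ openCyclicInterval n q.1 q.2)
    (B := C ∩ openCyclicInterval n q.2 q.1)
    ⟨Set.inter_subset_left, fun h => not_mem_openCyclicInterval_swap (h hyC).2 hy⟩
    ⟨Set.inter_subset_left, fun h => not_mem_openCyclicInterval_swap hx (h hxC).2⟩ ?_ ?_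
  · rw [← Set.inter_union_distrib_left, Set.inter_eq_left]
    intro x hx
    exact mem_openCyclicInterval_or_swap h12 (fun e => hCq x hx (by simp [Vp, e]))
      (fun e => hCq x hx (by simp [Vp, e]))
  · rw [Set.disjoint_left]
    rintro p ⟨hp, u, hup, huC, hu⟩ ⟨-, v, hvp, hvC, hv⟩
    rcases Vp_subset_of_not_crossing h12 h21 h12' (hcross q hq p hp) with h | h
    · exact (h hvp).elim (not_mem_openCyclicInterval_swap · hv) (hCq v hvC)
    · exact (h hup).elim (not_mem_openCyclicInterval_swap hu) (hCq u huC)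

lemma not_lt_lt_of_not_crossing (hq : q ∈ Ps) (hqF : Disjoint (Vp n q) F) (hz : z ∈ F)
    (hw : w ∈ F) (hu : u ∈ Vp n q) (hv : v ∈ Vp n q) :
    ¬ ((u - z).val < (w - z).val ∧ (w - z).val < (v - z).val) := by
  obtain ⟨-, h21, h12'⟩ := hW.support_ne hq
  rcases disjoint_openCyclicInterval_of_not_crossing hMI hW hcross hFE hF hq hqF with h | h
  · exact not_lt_lt_of_disjoint_openCyclicInterval_union h21 (h.union_right hqF.symm) hz hw hu hv
  · rw [← Prod.mk.eta (p := q), Vp_swap] at hu hv hqF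
    exact not_lt_lt_of_disjoint_openCyclicInterval_union h12' (h.union_right hqF.symm) hz hw hu hv

lemma propsOf_inter_subset_of_not_crossing {A B : Set (Fin n)} (hz : z ∈ F) (hw : w ∈ F)
    (hA : ∀ x ∈ A, (x - z).val < (w - z).val) (hB : ∀ x ∈ B, (w - z).val < (x - z).val) :
    propsOf n Ps (A ∪ F) ∩ propsOf n Ps (B ∪ F) ⊆ propsOf n Ps F := by
  rintro p ⟨hpA, hpB⟩
  by_contra hpF
  rw [propsOf_union] at hpA hpB
  obtain ⟨hp, u, hup, hu⟩ := hpA.resolve_right hpF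
  obtain ⟨-, v, hvp, hv⟩ := hpB.resolve_right hpF
  have hpF' : Disjoint (Vp n p) F :=
    Set.disjoint_iff_inter_eq_empty.2 (Set.not_nonempty_iff_eq_empty.1 fun h => hpF ⟨hp, h⟩)
  exact not_lt_lt_of_not_crossing hMI hW hcross hFE hF hp hpF' hz hw hup hvp ⟨hA u hu, hB v hv⟩

end Locality

theorem non_interval_flacet_implies_crossing_general (n : ℕ) [NeZero n]
    (Ps : Set (Fin n × Fin n)) (hW : WellDefinedWLD n Ps)
    (M : Matroid (Fin n)) (hME : M.E = Set.univ)
    (hMI : ∀ S : Set (Fin n), M.Indep S ↔ ∀ U ⊆ S, U.ncard ≤ (propsOf n Ps U).ncard)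
    (P : Set (Fin n × Fin n))
    (hcyc : M.UnionOfCircuits (FP n Ps P))
    (hres : (M ↾ FP n Ps P).Conn)
    (hcon : (M.contractBy (FP n Ps P)).Conn)
    (hnotint : ¬ CyclicInterval n (FP n Ps P)) :
    ∃ p ∈ Ps, ∃ q ∈ Ps, CrossingProps n p q := by
  by_contra! hcross
  set F := FP n Ps P
  have hFE : F ⊆ M.E := hME ▸ Set.subset_univ F
  have hcon : (M ／ F).Conn := hcon
  have hground : (M ／ F).E = Fᶜ := by rw [contract_ground, hME, Set.compl_eq_univ_sdiff]
  obtain ⟨z, hz⟩ : F.Nonempty := hres.1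
  obtain ⟨c, hc, d, hd, w, hw, hcw, hwd⟩ := exists_lt_lt_of_not_cyclicInterval hnotint hz
  obtain ⟨C, hC, hcC, hdC⟩ := hcon.exists_isCircuit (x := c) (y := d) (hground.symm ▸ hc)
    (hground.symm ▸ hd) (by rintro rfl; omega)
  have hCw : ∀ x ∈ C, (x - z).val ≠ (w - z).val := fun x hx h =>
    (hground ▸ hC.subset_ground hx) (sub_left_injective (Fin.ext h) ▸ hw)
  exact not_propsOf_inter_subset_of_contract_isCircuit hMI hFE hcyc hC
    (A := {x ∈ C | (x - z).val < (w - z).val}) (B := {x ∈ C | (w - z).val < (x - z).val})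
    ⟨Set.sep_subset _ _, fun h => (h hdC).2.not_gt hwd⟩
    ⟨Set.sep_subset _ _, fun h => (h hcC).2.not_gt hcw⟩
    (Set.ext fun x => ⟨by rintro (h | h) <;> exact h.1,
      fun hx => (hCw x hx).lt_or_gt.imp (⟨hx, ·⟩) (⟨hx, ·⟩)⟩)
    (propsOf_inter_subset_of_not_crossing hMI hW hcross hFE hres hz hw (fun _ hx => hx.2)
      (fun _ hx => hx.2))

/-- Let `W = (Ps, n)` be a well-defined Wilson loop diagram with
`V_Ps = Fin n` whose matroid `M = M(W)` is connected. If `P ⊆ Ps` is nonempty and proper,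
`F(P)` is a flacet of `M` (a union of circuits with `M ↾ F(P)` and `M / F(P)` both
connected), and `F(P)` is not a cyclic interval, then `W` has two crossing propagators. -/
theorem non_interval_flacet_implies_crossing (n : ℕ) [NeZero n]
    (Ps : Set (Fin n × Fin n)) (hW : WellDefinedWLD n Ps) (hcover : VP n Ps = Set.univ)
    (M : Matroid (Fin n)) (hME : M.E = Set.univ)
    (hMI : ∀ S : Set (Fin n), M.Indep S ↔ ∀ U ⊆ S, U.ncard ≤ (propsOf n Ps U).ncard)
    (hconn : M.Conn)
    (P : Set (Fin n × Fin n)) (hP : P ⊆ Ps) (hPne : P.Nonempty) (hPproper : P ≠ Ps)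
    (hcyc : M.UnionOfCircuits (FP n Ps P))
    (hres : (M ↾ FP n Ps P).Conn)
    (hcon : (M.contractBy (FP n Ps P)).Conn)
    (hnotint : ¬ CyclicInterval n (FP n Ps P)) :
    ∃ p ∈ Ps, ∃ q ∈ Ps, CrossingProps n p q :=
  non_interval_flacet_implies_crossing_general n Ps hW M hME hMI P hcyc hres hcon hnotint
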